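/- arXiv:math/0510146 — 2 statements merged into one kernel-verified Lean document; each statement's English description precedes it below -/
import Mathlib

section
/- Let Ψ be a frame for a Hilbert space H. The map O ↦ (⟨O ψ̃_n, ψ_m⟩)_{m,n} from B(H) to B(ℓ²) is an injective algebra homomorphism: it is linear, injective, and maps composition of operators to matrix multiplication. -/
/-! The analysis operator `C f = (⟪ψ k, f⟫)ₖ` is bounded by the upper frame bound, and the frame
operator is `S = C† C`. The lower frame bound makes `S` bounded below, hence (being self-adjoint)
invertible, so `D = S⁻¹ C†` is the synthesis operator of the dual frame, `D c = ∑ cₙ ψ̃ₙ`, and the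
reconstruction formula reads `D C = 1`. The matrix of `O` is therefore the operator `C O D`, and
`O ↦ C O D` is linear, multiplicative because `C O D C P D = C O P D`, and injective because
`D (C O D) C = O`. -/

open scoped InnerProductSpace

noncomputable section

local notation "ℓ²" => lp (fun _ : ℕ => ℂ) 2

variable {H₁ H₂ H₃ : Type*}
  [NormedAddCommGroup H₁] [InnerProductSpace ℂ H₁] [CompleteSpace H₁]
  [NormedAddCommGroup H₂] [InnerProductSpace ℂ H₂] [CompleteSpace H₂]
  [NormedAddCommGroup H₃] [InnerProductSpace ℂ H₃] [CompleteSpace H₃]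

/-- `ψ` is a Bessel sequence with bound `B`:  `∑ₖ |⟨f, ψₖ⟩|² ≤ B ‖f‖²`.
(Note: the paper's `⟨f, ψₖ⟩`, linear in `f`, is Mathlib's `⟪ψ k, f⟫_ℂ`.) -/
def IsBessel {H : Type*} [NormedAddCommGroup H] [InnerProductSpace ℂ H]
    (ψ : ℕ → H) (B : ℝ) : Prop :=
  ∀ f : H, Summable (fun k => ‖⟪ψ k, f⟫_ℂ‖ ^ 2) ∧
    ∑' k, ‖⟪ψ k, f⟫_ℂ‖ ^ 2 ≤ B * ‖f‖ ^ 2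

/-- `ψ` is a frame with bounds `A`, `B`:  `A ‖f‖² ≤ ∑ₖ |⟨f, ψₖ⟩|² ≤ B ‖f‖²`. -/
def IsFrame {H : Type*} [NormedAddCommGroup H] [InnerProductSpace ℂ H]
    (ψ : ℕ → H) (A B : ℝ) : Prop :=
  0 < A ∧ ∀ f : H, Summable (fun k => ‖⟪ψ k, f⟫_ℂ‖ ^ 2) ∧
    A * ‖f‖ ^ 2 ≤ ∑' k, ‖⟪ψ k, f⟫_ℂ‖ ^ 2 ∧
    ∑' k, ‖⟪ψ k, f⟫_ℂ‖ ^ 2 ≤ B * ‖f‖ ^ 2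

/-- `C` is the analysis operator of `ψ`:  `C f = (⟨f, ψₖ⟩)ₖ`. -/
def IsAnalysis {H : Type*} [NormedAddCommGroup H] [InnerProductSpace ℂ H]
    (ψ : ℕ → H) (C : H →L[ℂ] ℓ²) : Prop :=
  ∀ (f : H) (k : ℕ), C f k = ⟪ψ k, f⟫_ℂ

/-- `D` is the synthesis operator of `ψ`:  `D c = ∑ₖ cₖ ψₖ`. -/
def IsSynthesis {H : Type*} [NormedAddCommGroup H] [InnerProductSpace ℂ H]
    (ψ : ℕ → H) (D : ℓ² →L[ℂ] H) : Prop :=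
  ∀ c : ℓ², HasSum (fun k => c k • ψ k) (D c)

/-- `S` is the frame operator of `ψ`:  `S f = ∑ₖ ⟨f, ψₖ⟩ ψₖ`. -/
def IsFrameOp {H : Type*} [NormedAddCommGroup H] [InnerProductSpace ℂ H]
    (ψ : ℕ → H) (S : H →L[ℂ] H) : Prop :=
  ∀ f : H, HasSum (fun k => ⟪ψ k, f⟫_ℂ • ψ k) (S f)

/-- `dψ` is the canonical dual of `ψ`, whose frame operator is `S`: `dψ k = S⁻¹ ψ k`. -/
def IsCanonicalDual {H : Type*} [NormedAddCommGroup H] [InnerProductSpace ℂ H]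
    (ψ : ℕ → H) (S : H →L[ℂ] H) (dψ : ℕ → H) : Prop :=
  IsFrameOp ψ S ∧ ∀ k, S (dψ k) = ψ k

/-- `ψ` is a Riesz basis with bounds `A`, `B`: it is complete and
`A ∑|cₖ|² ≤ ‖∑ cₖ ψₖ‖² ≤ B ∑|cₖ|²` for all finite sequences `c`. -/
def IsRieszBasis {H : Type*} [NormedAddCommGroup H] [InnerProductSpace ℂ H]
    (ψ : ℕ → H) (A B : ℝ) : Prop :=
  0 < A ∧ (Submodule.span ℂ (Set.range ψ)).topologicalClosure = ⊤ ∧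
    ∀ c : ℕ →₀ ℂ,
      A * ∑ k ∈ c.support, ‖c k‖ ^ 2 ≤ ‖∑ k ∈ c.support, c k • ψ k‖ ^ 2 ∧
      ‖∑ k ∈ c.support, c k • ψ k‖ ^ 2 ≤ B * ∑ k ∈ c.support, ‖c k‖ ^ 2


lemma lp.norm_sq_eq_tsum {ι : Type*} {E : ι → Type*} [∀ i, NormedAddCommGroup (E i)]
    (x : lp E 2) : ‖x‖ ^ 2 = ∑' i, ‖x i‖ ^ 2 := by
  simpa using lp.norm_rpow_eq_tsum (p := 2) (by norm_num) x

namespace ContinuousLinearMap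

section Conj

variable {R E F : Type*} [Semiring R]
  [AddCommMonoid E] [Module R E] [TopologicalSpace E]
  [AddCommMonoid F] [Module R F] [TopologicalSpace F]
  {C : E →L[R] F} {D : F →L[R] E}

lemma conj_injective_of_comp_eq_id (hDC : D ∘L C = ContinuousLinearMap.id R E) :
    Function.Injective fun O : E →L[R] E => C ∘L (O ∘L D) := by
  refine Function.LeftInverse.injective (g := fun T => D ∘L (T ∘L C)) fun O => ?_
  simp only [comp_assoc, hDC, comp_id]
  rw [← comp_assoc, hDC, id_comp]

lemma conj_comp_of_comp_eq_id (hDC : D ∘L C = ContinuousLinearMap.id R E) (O P : E →L[R] E) :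
    C ∘L ((O ∘L P) ∘L D) = (C ∘L (O ∘L D)) ∘L (C ∘L (P ∘L D)) := by
  simp only [comp_assoc]
  rw [← comp_assoc D C, hDC, id_comp]

end Conj

section Adjoint

open scoped InnerProduct

variable {𝕜 E F : Type*} [RCLike 𝕜]
  [NormedAddCommGroup E] [InnerProductSpace 𝕜 E] [CompleteSpace E]
  [NormedAddCommGroup F] [InnerProductSpace 𝕜 F] [CompleteSpace F]

lemma mul_norm_le_norm_adjoint_comp_self (T : E →L[𝕜] F) {A : ℝ} {x : E}
    (hx : A * ‖x‖ ^ 2 ≤ ‖T x‖ ^ 2) : A * ‖x‖ ≤ ‖(T† ∘L T) x‖ := by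
  have h : A * ‖x‖ * ‖x‖ ≤ ‖(T† ∘L T) x‖ * ‖x‖ :=
    calc A * ‖x‖ * ‖x‖ = A * ‖x‖ ^ 2 := by ring
      _ ≤ ‖T x‖ ^ 2 := hx
      _ = RCLike.re ⟪(T† ∘L T) x, x⟫_𝕜 := T.apply_norm_sq_eq_inner_adjoint_left x
      _ ≤ ‖(T† ∘L T) x‖ * ‖x‖ := re_inner_le_norm _ _
  rcases (norm_nonneg x).eq_or_lt with hx0 | hxpos
  · simp [← hx0]
  · exact le_of_mul_le_mul_right h hxpos

lemma surjective_of_isSelfAdjoint_of_antilipschitz {T : E →L[𝕜] E} (hT : IsSelfAdjoint T)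
    {K : NNReal} (hK : AntilipschitzWith K T) : Function.Surjective T := by
  have : CompleteSpace T.range := (hK.isClosed_range T.uniformContinuous).completeSpace_coe
  have hker : T.ker = ⊥ := LinearMap.ker_eq_bot_of_injective hK.injective
  refine (LinearMap.range_eq_top (f := (T : E →ₗ[𝕜] E))).mp ?_
  rw [← Submodule.orthogonal_eq_bot_iff]
  simpa [isSelfAdjoint_iff'.mp hT, hker] using T.orthogonal_range

lemma bijective_adjoint_comp_self (T : E →L[𝕜] F) {A : ℝ} (hA : 0 < A)
    (hT : ∀ x, A * ‖x‖ ^ 2 ≤ ‖T x‖ ^ 2) : Function.Bijective (T† ∘L T) := by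
  have hK : AntilipschitzWith (Real.toNNReal A⁻¹) (T† ∘L T) := by
    refine (T† ∘L T).antilipschitz_of_bound fun x => ?_
    rw [Real.coe_toNNReal _ (inv_nonneg.mpr hA.le), inv_mul_eq_div, le_div_iff₀' hA]
    exact T.mul_norm_le_norm_adjoint_comp_self (hT x)
  have hT' : IsSelfAdjoint (T† ∘L T) := by
    rw [isSelfAdjoint_iff', adjoint_comp, adjoint_adjoint]
  exact ⟨hK.injective, surjective_of_isSelfAdjoint_of_antilipschitz hT' hK⟩

end Adjoint

end ContinuousLinearMap


section Frame

open ContinuousLinearMap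
open scoped InnerProduct

variable {H : Type*} [NormedAddCommGroup H] [InnerProductSpace ℂ H]
  {ψ : ℕ → H} {A B : ℝ}

lemma IsFrame.isBessel (hψ : IsFrame ψ A B) : IsBessel ψ B :=
  fun f => ⟨(hψ.2 f).1, (hψ.2 f).2.2⟩

lemma IsBessel.exists_isAnalysis (hψ : IsBessel ψ B) :
    ∃ C : H →L[ℂ] ℓ², IsAnalysis ψ C := by
  let L : H →ₗ[ℂ] ℓ² :=
    { toFun := fun f => ⟨fun k => ⟪ψ k, f⟫_ℂ, memℓp_gen (by simpa using (hψ f).1)⟩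
      map_add' := fun f g => lp.ext <| funext fun k => inner_add_right _ _ _
      map_smul' := fun a f => lp.ext <| funext fun k => inner_smul_right _ _ _ }
  refine ⟨L.mkContinuous √B fun f => ?_, fun f k => rfl⟩
  rw [← Real.sqrt_sq (norm_nonneg (L f)), ← Real.sqrt_sq (norm_nonneg f),
    ← Real.sqrt_mul' _ (sq_nonneg _)]
  exact Real.sqrt_le_sqrt (lp.norm_sq_eq_tsum (L f) ▸ (hψ f).2)

lemma IsAnalysis.norm_sq_apply {C : H →L[ℂ] ℓ²} (hC : IsAnalysis ψ C) (f : H) :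
    ‖C f‖ ^ 2 = ∑' k, ‖⟪ψ k, f⟫_ℂ‖ ^ 2 := by
  simp only [lp.norm_sq_eq_tsum, hC f]

lemma IsSynthesis.hasSum_inner_mul {φ : ℕ → H} {D : ℓ² →L[ℂ] H} (hD : IsSynthesis φ D)
    (O : H →L[ℂ] H) (v : H) (c : ℓ²) :
    HasSum (fun n => ⟪v, O (φ n)⟫_ℂ * c n) ⟪v, O (D c)⟫_ℂ := by
  simpa only [map_smul, innerSL_apply_apply, inner_smul_right, smul_eq_mul, mul_comm]
    using (innerSL ℂ v).hasSum (O.hasSum (hD c))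

variable [CompleteSpace H]

lemma IsAnalysis.isSynthesis_adjoint {C : H →L[ℂ] ℓ²} (hC : IsAnalysis ψ C) :
    IsSynthesis ψ (C†) := by
  intro c
  have hsingle : ∀ k, (C†) (lp.single 2 k (c k)) = c k • ψ k := fun k =>
    ext_inner_right ℂ fun v => by
      rw [adjoint_inner_left, lp.inner_single_left, hC, inner_smul_left, RCLike.inner_apply,
        mul_comm]
  simpa only [hsingle] using (C†).hasSum (lp.hasSum_single (by norm_num) c)

lemma IsAnalysis.adjoint_comp_self_eq {C : H →L[ℂ] ℓ²} {S : H →L[ℂ] H}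
    (hC : IsAnalysis ψ C) (hS : IsFrameOp ψ S) : C† ∘L C = S := by
  ext f
  refine (hC.isSynthesis_adjoint (C f)).unique ?_
  simpa only [hC f] using hS f

lemma IsCanonicalDual.exists_isSynthesis_comp_eq_id {S : H →L[ℂ] H} {dψ : ℕ → H}
    (hψ : IsFrame ψ A B) (hdψ : IsCanonicalDual ψ S dψ) {C : H →L[ℂ] ℓ²}
    (hC : IsAnalysis ψ C) :
    ∃ D : ℓ² →L[ℂ] H, IsSynthesis dψ D ∧ D ∘L C = ContinuousLinearMap.id ℂ H := by
  have hCS := hC.adjoint_comp_self_eq hdψ.1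
  have hbij : Function.Bijective S := hCS ▸
    C.bijective_adjoint_comp_self hψ.1 fun f => hC.norm_sq_apply f ▸ (hψ.2 f).2.1
  let E := ContinuousLinearEquiv.ofBijective S (LinearMap.ker_eq_bot_of_injective hbij.1)
    (LinearMap.range_eq_top_of_surjective _ hbij.2)
  have hdual : ∀ k, E.symm (ψ k) = dψ k := fun k => E.symm_apply_eq.mpr (hdψ.2 k).symm
  refine ⟨E.symm ∘L C†, fun c => ?_, ?_⟩
  · simpa only [comp_apply, map_smul, ContinuousLinearEquiv.coe_coe, hdual]
      using (E.symm : H →L[ℂ] H).hasSum (hC.isSynthesis_adjoint c)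
  · ext f
    rw [comp_apply, comp_apply, id_apply, ← comp_apply (C†) C, hCS,
      ContinuousLinearEquiv.coe_coe]
    exact ContinuousLinearEquiv.ofBijective_symm_apply_apply _ _ _ f

end Frame

/-- For a frame `ψ` with canonical dual `dψ`, the map
`O ↦ (⟨O ψ̃ₙ, ψₘ⟩)ₘₙ` from `B(H)` to `B(ℓ²)` is a linear, injective and multiplicative,
i.e. an injective algebra homomorphism. -/
theorem stmt7 {ψ : ℕ → H₁} {A B : ℝ}
    (hΨ : IsFrame ψ A B)
    (S : H₁ →L[ℂ] H₁) (dψ : ℕ → H₁) (hdΨ : IsCanonicalDual ψ S dψ)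
    (𝓜 : (H₁ →L[ℂ] H₁) → (ℓ² →L[ℂ] ℓ²))
    (h𝓜 : ∀ (O : H₁ →L[ℂ] H₁) (c : ℓ²) (m : ℕ),
      𝓜 O c m = ∑' n, ⟪ψ m, O (dψ n)⟫_ℂ * c n) :
    Function.Injective 𝓜 ∧
    (∀ (a : ℂ) (O P : H₁ →L[ℂ] H₁), 𝓜 (a • O + P) = a • 𝓜 O + 𝓜 P) ∧
    (∀ O P : H₁ →L[ℂ] H₁, 𝓜 (O.comp P) = (𝓜 O).comp (𝓜 P)) := by
  obtain ⟨C, hC⟩ := hΨ.isBessel.exists_isAnalysis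
  obtain ⟨D, hD, hDC⟩ := hdΨ.exists_isSynthesis_comp_eq_id hΨ hC
  obtain rfl : 𝓜 = fun O => C ∘L (O ∘L D) := by
    ext O c m
    rw [h𝓜, (hD.hasSum_inner_mul O (ψ m) c).tsum_eq]
    exact (hC _ m).symm
  refine ⟨ContinuousLinearMap.conj_injective_of_comp_eq_id hDC, fun a O P => ?_,
    ContinuousLinearMap.conj_comp_of_comp_eq_id hDC⟩
  simp only [ContinuousLinearMap.add_comp, ContinuousLinearMap.smul_comp,
    ContinuousLinearMap.comp_add, ContinuousLinearMap.comp_smul]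
end
end

section
/- Let O : H₁ → H₂ be bounded, Ψ a frame in H₁ and Φ a frame in H₂. Then the matrix M with entries M_{m,n} = ⟨O ψ̃_n, φ_m⟩ maps the range of the analysis operator C_Ψ into the range of C_Φ via (⟨f, ψ_k⟩)_k ↦ (⟨Of, φ_k⟩)_k. If O is surjective, M maps ran(C_Ψ) onto ran(C_Φ); if O is injective, M restricted to ran(C_Ψ) is injective. -/
open scoped InnerProductSpace

noncomputable section

local notation "ℓ²" => lp (fun _ : ℕ => ℂ) 2

variable {H₁ H₂ H₃ : Type*}
  [NormedAddCommGroup H₁] [InnerProductSpace ℂ H₁] [CompleteSpace H₁]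
  [NormedAddCommGroup H₂] [InnerProductSpace ℂ H₂] [CompleteSpace H₂]
  [NormedAddCommGroup H₃] [InnerProductSpace ℂ H₃] [CompleteSpace H₃]

/-! The lower frame bound gives `A ‖f‖ ≤ ‖S f‖`, so the frame operator `S` is a topological
embedding. Since `S` maps the partial sums of `∑ ⟨f, ψₙ⟩ ψ̃ₙ` to those of `∑ ⟨f, ψₙ⟩ ψₙ → S f`,
this yields the reconstruction `f = ∑ ⟨f, ψₙ⟩ ψ̃ₙ` without inverting `S`. Pairing it with
`O* φₘ` gives `M (C_Ψ f) = C_Φ (O f)`; surjectivity follows at once, and injectivity from the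
injectivity of `C_Φ`, which is the lower frame bound of `Φ`. -/

section Frames

variable {H : Type*} [NormedAddCommGroup H] [InnerProductSpace ℂ H] {ψ : ℕ → H}

theorem IsFrameOp.hasSum_inner_self {S : H →L[ℂ] H} (hS : IsFrameOp ψ S) (f : H) :
    HasSum (fun k => ((‖⟪ψ k, f⟫_ℂ‖ ^ 2 : ℝ) : ℂ)) ⟪f, S f⟫_ℂ := by
  have hterm (k : ℕ) : innerSL ℂ f (⟪ψ k, f⟫_ℂ • ψ k) = ((‖⟪ψ k, f⟫_ℂ‖ ^ 2 : ℝ) : ℂ) := by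
    rw [innerSL_apply_apply, inner_smul_right, ← inner_conj_symm (ψ k) f, RCLike.conj_mul,
      RCLike.norm_conj]
    norm_cast
  have h := (hS f).mapL (innerSL ℂ f)
  simp only [hterm] at h
  exact h

theorem IsFrame.eq_zero_of_forall_inner_eq_zero {A B : ℝ} (h : IsFrame ψ A B) {f : H}
    (hf : ∀ k, ⟪ψ k, f⟫_ℂ = 0) : f = 0 := by
  have hlower := (h.2 f).2.1
  simp only [hf, norm_zero, zero_pow two_ne_zero, tsum_zero] at hlower
  simpa using nonpos_of_mul_nonpos_right hlower h.1

theorem IsAnalysis.injective {A B : ℝ} {C : H →L[ℂ] ℓ²} (hC : IsAnalysis ψ C)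
    (h : IsFrame ψ A B) : Function.Injective C := by
  refine (injective_iff_map_eq_zero C).2 fun f hf => h.eq_zero_of_forall_inner_eq_zero fun k => ?_
  rw [← hC, hf, lp.coeFn_zero, Pi.zero_apply]

theorem IsFrame.mul_norm_le_norm_frameOp {A B : ℝ} {S : H →L[ℂ] H} (h : IsFrame ψ A B)
    (hS : IsFrameOp ψ S) (f : H) : A * ‖f‖ ≤ ‖S f‖ := by
  rcases (norm_nonneg f).eq_or_lt with hf | hf
  · simp [← hf]
  have hsum : ∑' k, ‖⟪ψ k, f⟫_ℂ‖ ^ 2 ≤ ‖f‖ * ‖S f‖ :=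
    calc ∑' k, ‖⟪ψ k, f⟫_ℂ‖ ^ 2 = ‖⟪f, S f⟫_ℂ‖ := by
          rw [← (hS.hasSum_inner_self f).tsum_eq, ← Complex.ofReal_tsum, Complex.norm_real,
            Real.norm_of_nonneg (tsum_nonneg fun _ => by positivity)]
      _ ≤ ‖f‖ * ‖S f‖ := norm_inner_le_norm f (S f)
  nlinarith [(h.2 f).2.1]

theorem IsFrame.isInducing_frameOp {A B : ℝ} {S : H →L[ℂ] H} (h : IsFrame ψ A B)
    (hS : IsFrameOp ψ S) : Topology.IsInducing S := by
  refine (S.antilipschitz_of_bound (K := (A⁻¹).toNNReal) fun f => ?_).isInducing S.continuous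
  rw [Real.coe_toNNReal _ (inv_nonneg.2 h.1.le), le_inv_mul_iff₀ h.1]
  exact h.mul_norm_le_norm_frameOp hS f

theorem IsCanonicalDual.hasSum_inner_smul {A B : ℝ} {S : H →L[ℂ] H} {dψ : ℕ → H}
    (h : IsFrame ψ A B) (hd : IsCanonicalDual ψ S dψ) (f : H) :
    HasSum (fun n => ⟪ψ n, f⟫_ℂ • dψ n) f := by
  rw [← (h.isInducing_frameOp hd.1).hasSum_iff]
  simpa [Function.comp_def, hd.2] using hd.1 f

theorem IsCanonicalDual.apply_eq_tsum {A B : ℝ} {S : H →L[ℂ] H} {dψ : ℕ → H}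
    (h : IsFrame ψ A B) (hd : IsCanonicalDual ψ S dψ) (L : H →L[ℂ] ℂ) (f : H) :
    L f = ∑' n, L (dψ n) * ⟪ψ n, f⟫_ℂ := by
  simp only [((hd.hasSum_inner_smul h f).mapL L).tsum_eq.symm, map_smul, smul_eq_mul, mul_comm]

end Frames

/-- The matrix `M` with entries `⟨O ψ̃ₙ, φₘ⟩` maps `ran C_Ψ` into
`ran C_Φ` via `(⟨f, ψₖ⟩)ₖ ↦ (⟨O f, φₖ⟩)ₖ`; onto if `O` is surjective, and injectively on
`ran C_Ψ` if `O` is injective. -/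
theorem stmt8 {ψ : ℕ → H₁} {φ : ℕ → H₂} {A B A' B' : ℝ}
    (hΨ : IsFrame ψ A B) (hΦ : IsFrame φ A' B')
    (S : H₁ →L[ℂ] H₁) (dψ : ℕ → H₁) (hdΨ : IsCanonicalDual ψ S dψ)
    (O : H₁ →L[ℂ] H₂)
    (CΨ : H₁ →L[ℂ] ℓ²) (hCΨ : IsAnalysis ψ CΨ)
    (CΦ : H₂ →L[ℂ] ℓ²) (hCΦ : IsAnalysis φ CΦ)
    (M : ℓ² →L[ℂ] ℓ²)
    (hM : ∀ (c : ℓ²) (m : ℕ), M c m = ∑' n, ⟪φ m, O (dψ n)⟫_ℂ * c n) :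
    (∀ f : H₁, M (CΨ f) = CΦ (O f)) ∧
    (Function.Surjective O → Set.SurjOn M (Set.range (⇑CΨ)) (Set.range (⇑CΦ))) ∧
    (Function.Injective O → Set.InjOn M (Set.range (⇑CΨ))) := by
  have hmatrix (f : H₁) : M (CΨ f) = CΦ (O f) := lp.ext <| funext fun m => by
    rw [hM, hCΦ]
    refine (tsum_congr fun n => ?_).trans (hdΨ.apply_eq_tsum hΨ ((innerSL ℂ (φ m)).comp O) f).symm
    rw [hCΨ]
    rfl
  refine ⟨hmatrix, ?_, ?_⟩
  · rintro hO _ ⟨g, rfl⟩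
    obtain ⟨f, rfl⟩ := hO g
    exact ⟨CΨ f, Set.mem_range_self f, hmatrix f⟩
  · rintro hO _ ⟨f, rfl⟩ _ ⟨f', rfl⟩ h
    rw [hmatrix, hmatrix] at h
    rw [hO (hCΦ.injective hΦ h)]
end
end
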